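/- Let K be a totally real number field of degree d ≥ 2, and for each 1 ≤ i ≤ d let u⁽ⁱ⁾ be a totally positive unit of O_K with σ_j(u⁽ⁱ⁾) > 1 if and only if j = i; set b = max_{i ≠ j} (σ_i(u⁽ⁱ⁾) − 1)/(1 − σ_j(u⁽ⁱ⁾)). Let I be a fractional ideal of K. Then every I-reducer x satisfies x_i ≤ (min I)·d·b for all i; in particular the set R_I of I-reducers is finite. -/

import Mathlib

open NumberField
open scoped nonZeroDivisors


/-- `y` is trace-minimal: `tr(uy) ≥ tr(y)` for every totally positive unit `u`. -/
def TraceMin (K : Type*) [Field K] [NumberField K] {d : ℕ}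
    (σ : Fin d → (K →+* ℝ)) (y : K) : Prop :=
  ∀ u : (𝓞 K)ˣ, (∀ i, 0 < σ i ((u : 𝓞 K) : K)) →
    Algebra.trace ℚ K y ≤ Algebra.trace ℚ K (((u : 𝓞 K) : K) * y)

/-- `x` is an `I`-reducer (with `m = min I`): `x` is a totally positive element of `I` with
`tr(xy) < m · tr(y)` for some totally positive trace-minimal `y`. -/
def IsReducer (K : Type*) [Field K] [NumberField K] {d : ℕ}
    (σ : Fin d → (K →+* ℝ)) (I : FractionalIdeal (𝓞 K)⁰ K) (m : ℚ) (x : K) : Prop :=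
  x ∈ I ∧ (∀ i, 0 < σ i x) ∧
    ∃ y : K, (∀ i, 0 < σ i y) ∧ TraceMin K σ y ∧
      Algebra.trace ℚ K (x * y) < m * Algebra.trace ℚ K y

section aux

variable (K : Type*) [Field K] [NumberField K] {d : ℕ}

/-- The real embeddings, viewed as complex embeddings. -/
noncomputable def auxE (σ : Fin d → (K →+* ℝ)) : Fin d → (K →+* ℂ) :=
  fun i => (Complex.ofRealHom).comp (σ i)

lemma auxE_bij (σ : Fin d → (K →+* ℝ)) (hσ : Function.Injective σ)
    (hd : d = Module.finrank ℚ K) : Function.Bijective (auxE K σ) := by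
  refine (Fintype.bijective_iff_injective_and_card _).2 ⟨?_, ?_⟩
  · intro i j h
    apply hσ
    ext z
    have := congrArg (fun f : K →+* ℂ => f z) h
    simpa [auxE, Complex.ofReal_inj] using this
  · rw [Fintype.card_fin, NumberField.Embeddings.card K ℂ, hd]

lemma aux_trace (σ : Fin d → (K →+* ℝ)) (hσ : Function.Injective σ)
    (hd : d = Module.finrank ℚ K) (z : K) :
    ((Algebra.trace ℚ K z : ℚ) : ℝ) = ∑ i, σ i z := by
  have h1 : algebraMap ℚ ℂ (Algebra.trace ℚ K z) = ∑ ψ : K →ₐ[ℚ] ℂ, ψ z :=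
    trace_eq_sum_embeddings ℂ
  have h2 : ∑ φ : K →+* ℂ, φ z = ∑ ψ : K →ₐ[ℚ] ℂ, ψ z :=
    Fintype.sum_equiv (RingHom.equivRatAlgHom K ℂ) _ _ (fun _ => rfl)
  have h3 : ∑ φ : K →+* ℂ, φ z = ∑ i, auxE K σ i z :=
    (Fintype.sum_bijective _ (auxE_bij K σ hσ hd) _ _ (fun i => rfl)).symm
  have h4 : ((((Algebra.trace ℚ K z : ℚ) : ℝ)) : ℂ) = ((∑ i, σ i z : ℝ) : ℂ) := by
    rw [Complex.ofReal_sum]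
    have : (((Algebra.trace ℚ K z : ℚ) : ℝ) : ℂ) = algebraMap ℚ ℂ (Algebra.trace ℚ K z) := by
      push_cast; simp [Complex.coe_algebraMap]
    rw [this, h1, ← h2, h3]
    rfl
  exact_mod_cast h4

end aux

/-- With units `u i` and bound `b` as before, and `m = min I` the least positive rational in
the fractional ideal `I`, every `I`-reducer `x` satisfies `σ i x ≤ m·d·b` for all `i`; in
particular the set of `I`-reducers is finite. -/
theorem stmt7
    (K : Type*) [Field K] [NumberField K] (d : ℕ) (hd2 : 2 ≤ d)
    (σ : Fin d → (K →+* ℝ)) (hσ : Function.Injective σ)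
    (hd : d = Module.finrank ℚ K)
    (u : Fin d → (𝓞 K)ˣ)
    (hupos : ∀ i j, 0 < σ j ((u i : 𝓞 K) : K))
    (hu1 : ∀ i j, 1 < σ j ((u i : 𝓞 K) : K) ↔ j = i)
    (b : ℝ)
    (hb : IsGreatest {r : ℝ | ∃ i j, i ≠ j ∧
      r = (σ i ((u i : 𝓞 K) : K) - 1) / (1 - σ j ((u i : 𝓞 K) : K))} b)
    (I : FractionalIdeal (𝓞 K)⁰ K) (m : ℚ)
    (hm : IsLeast {r : ℚ | 0 < r ∧ algebraMap ℚ K r ∈ I} m) :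
    (∀ x : K, IsReducer K σ I m x → ∀ i, σ i x ≤ (m : ℝ) * d * b) ∧
    {x : K | IsReducer K σ I m x}.Finite := by
  have htr := aux_trace K σ hσ hd
  -- σ k (u k) > 1
  have huk1 : ∀ k, 1 < σ k ((u k : 𝓞 K) : K) := fun k => (hu1 k k).2 rfl
  -- σ j (u k) < 1 for j ≠ k
  have hult1 : ∀ k j, j ≠ k → σ j ((u k : 𝓞 K) : K) < 1 := by
    intro k j hjk
    rcases lt_or_eq_of_le (not_lt.1 (fun h => hjk ((hu1 k j).1 h))) with h | h
    · exact h
    · exfalso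
      have h1 : ((u k : 𝓞 K) : K) = 1 := (σ j).injective (by simpa using h)
      have h2 := huk1 k
      rw [h1] at h2
      simp at h2
  -- b is positive
  have hbpos : 0 < b := by
    obtain ⟨k, j, hkj, hbe⟩ := hb.1
    rw [hbe]
    exact div_pos (by linarith [huk1 k]) (by linarith [hult1 k j (Ne.symm hkj)])
  -- m positive
  have hmpos : (0 : ℝ) < (m : ℝ) := by exact_mod_cast hm.1.1
  -- key step inequality for trace-minimal totally positive y
  have step : ∀ y : K, (∀ i, 0 < σ i y) → TraceMin K σ y →
      ∀ k j, j ≠ k → σ j y ≤ b * σ k y := by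
    intro y hypos hymin k j hjk
    have h0 : ((Algebra.trace ℚ K y : ℚ) : ℝ) ≤
        ((Algebra.trace ℚ K (((u k : 𝓞 K) : K) * y) : ℚ) : ℝ) := by
      exact_mod_cast hymin (u k) (hupos k)
    rw [htr, htr] at h0
    simp only [map_mul] at h0
    -- ∑ j, (σ j u_k - 1) * σ j y ≥ 0
    have h1 : (1 - σ j ((u k : 𝓞 K) : K)) * σ j y ≤
        (σ k ((u k : 𝓞 K) : K) - 1) * σ k y := by
      have hsplit : ∀ f : Fin d → ℝ, ∑ l, f l = f k + ∑ l ∈ Finset.univ.erase k, f l := by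
        intro f
        rw [Finset.add_sum_erase _ f (Finset.mem_univ k)]
      have hsum : ∑ l ∈ Finset.univ.erase k, (1 - σ l ((u k : 𝓞 K) : K)) * σ l y ≤
          (σ k ((u k : 𝓞 K) : K) - 1) * σ k y := by
        have e1 := hsplit (fun l => σ l y)
        have e2 := hsplit (fun l => σ l ((u k : 𝓞 K) : K) * σ l y)
        rw [e1, e2] at h0
        have : ∑ l ∈ Finset.univ.erase k, (1 - σ l ((u k : 𝓞 K) : K)) * σ l y
            = ∑ l ∈ Finset.univ.erase k, σ l y
              - ∑ l ∈ Finset.univ.erase k, σ l ((u k : 𝓞 K) : K) * σ l y := by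
          rw [← Finset.sum_sub_distrib]
          exact Finset.sum_congr rfl (fun l _ => by ring)
        rw [this]
        linarith
      have hone : (1 - σ j ((u k : 𝓞 K) : K)) * σ j y ≤
          ∑ l ∈ Finset.univ.erase k, (1 - σ l ((u k : 𝓞 K) : K)) * σ l y := by
        refine Finset.single_le_sum (f := fun l => (1 - σ l ((u k : 𝓞 K) : K)) * σ l y) (fun l hl => ?_) (Finset.mem_erase.2 ⟨hjk, Finset.mem_univ j⟩)
        have hlk : l ≠ k := (Finset.mem_erase.1 hl).1
        exact mul_nonneg (by linarith [hult1 k l hlk]) (le_of_lt (hypos l))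
      linarith
    have hden : 0 < 1 - σ j ((u k : 𝓞 K) : K) := by linarith [hult1 k j hjk]
    have hratio : (σ k ((u k : 𝓞 K) : K) - 1) / (1 - σ j ((u k : 𝓞 K) : K)) ≤ b :=
      hb.2 ⟨k, j, Ne.symm hjk, rfl⟩
    have h2 : σ j y ≤ (σ k ((u k : 𝓞 K) : K) - 1) / (1 - σ j ((u k : 𝓞 K) : K)) * σ k y := by
      rw [div_mul_eq_mul_div, le_div_iff₀ hden]
      linarith [h1]
    calc σ j y ≤ _ := h2
      _ ≤ b * σ k y := by
          exact mul_le_mul_of_nonneg_right hratio (le_of_lt (hypos k))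
  -- the main bound
  have key : ∀ x : K, IsReducer K σ I m x → ∀ i, σ i x ≤ (m : ℝ) * d * b := by
    rintro x ⟨hxI, hxpos, y, hypos, hymin, hylt⟩ i
    -- 1 ≤ b
    have hb1 : 1 ≤ b := by
      obtain ⟨j, hj⟩ : ∃ j : Fin d, j ≠ i := by
        have : 1 < Fintype.card (Fin d) := by simpa using lt_of_lt_of_le one_lt_two hd2
        exact Fintype.exists_ne_of_one_lt_card this i
      have h1 := step y hypos hymin i j hj
      have h2 := step y hypos hymin j i (Ne.symm hj)
      nlinarith [hypos i, hypos j, hbpos, mul_le_mul_of_nonneg_left h1 (le_of_lt hbpos)]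
    -- trace y ≤ d * b * σ i y
    have htry : ((Algebra.trace ℚ K y : ℚ) : ℝ) ≤ d * (b * σ i y) := by
      rw [htr]
      calc ∑ j, σ j y ≤ ∑ _j : Fin d, b * σ i y := by
            refine Finset.sum_le_sum (fun j _ => ?_)
            rcases eq_or_ne j i with rfl | hji
            · nlinarith [hypos j]
            · exact step y hypos hymin i j hji
        _ = d * (b * σ i y) := by simp [Finset.sum_const, mul_comm]
    -- σ i x * σ i y ≤ trace (x*y)
    have htxy : σ i x * σ i y ≤ ((Algebra.trace ℚ K (x * y) : ℚ) : ℝ) := by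
      rw [htr]
      simp only [map_mul]
      exact Finset.single_le_sum
        (fun j _ => mul_nonneg (le_of_lt (hxpos j)) (le_of_lt (hypos j))) (Finset.mem_univ i)
    have hlt : ((Algebra.trace ℚ K (x * y) : ℚ) : ℝ) <
        (m : ℝ) * ((Algebra.trace ℚ K y : ℚ) : ℝ) := by
      have := hylt
      exact_mod_cast this
    have h3 : σ i x * σ i y < (m : ℝ) * (d * (b * σ i y)) := by
      calc σ i x * σ i y ≤ _ := htxy
        _ < (m : ℝ) * ((Algebra.trace ℚ K y : ℚ) : ℝ) := hlt
        _ ≤ (m : ℝ) * (d * (b * σ i y)) := by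
            exact mul_le_mul_of_nonneg_left htry (le_of_lt hmpos)
      
    have h4 : σ i x * σ i y < ((m : ℝ) * d * b) * σ i y := by
      rw [mul_assoc, mul_assoc]; exact h3
    exact le_of_lt (lt_of_mul_lt_mul_right h4 (le_of_lt (hypos i)))
  refine ⟨key, ?_⟩
  -- finiteness
  obtain ⟨a, haS, haI⟩ := I.isFractional
  have ha0 : ((a : 𝓞 K) : K) ≠ 0 :=
    (RingOfIntegers.coe_ne_zero_iff).2 (nonZeroDivisors.ne_zero haS)
  haveI : Nonempty (Fin d) := ⟨⟨0, by omega⟩⟩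
  set A : ℝ := Finset.univ.sup' Finset.univ_nonempty (fun j : Fin d => |σ j ((a : 𝓞 K) : K)|)
    with hA
  set C : ℝ := (m : ℝ) * d * b with hC
  have hfin := NumberField.Embeddings.finite_of_norm_le K ℂ (A * C)
  have hinj : Function.Injective (fun x : K => ((a : 𝓞 K) : K) * x) :=
    fun x y h => by
      have := mul_left_cancel₀ ha0 h
      exact this
  refine Set.Finite.subset (hfin.preimage (hinj.injOn)) ?_
  intro x hx
  obtain ⟨hxI, hxpos, -⟩ := id hx
  constructor
  · -- integrality
    obtain ⟨z, hz⟩ := haI x hxI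
    have : ((a : 𝓞 K) : K) * x = (z : K) := by
      have h5 := hz
      rw [Algebra.smul_def] at h5
      exact h5.symm
    simp only [Set.mem_preimage]
    rw [this]
    exact RingOfIntegers.isIntegral_coe z
  · intro φ
    obtain ⟨j, rfl⟩ := (auxE_bij K σ hσ hd).surjective φ
    have : ‖auxE K σ j (((a : 𝓞 K) : K) * x)‖
        = |σ j ((a : 𝓞 K) : K)| * |σ j x| := by
      simp [auxE, Complex.norm_real, Real.norm_eq_abs, abs_mul]
    rw [this]
    have h1 : |σ j ((a : 𝓞 K) : K)| ≤ A := by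
      rw [hA]; exact Finset.le_sup' (fun j : Fin d => |σ j ((a : 𝓞 K) : K)|) (Finset.mem_univ j)
    have h2 : |σ j x| ≤ C := by
      rw [abs_of_pos (hxpos j)]
      exact key x hx j
    exact mul_le_mul h1 h2 (abs_nonneg _) (le_trans (abs_nonneg _) h1)
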